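/- arXiv:1809.06982 — 4 statements merged into one kernel-verified Lean document; each statement's English description precedes it below -/
import Mathlib

section
/- Let κ > 0, ρ₀ > 0, 0 < b ≤ ρ₀, and Λ ≥ κ be real numbers, let α be a real number, and let K : ℝ → ℝ be integrable on [0, b] with K(t) ≥ −κ² for all t ∈ [0, b]. Then α²·(−Λ·cosh(κb)² + ∫₀^b (κ²·sinh(κt)² − cosh(κt)²·K(t)) dt) ≤ α²·(κ·tanh(κρ₀) − Λ), and the right-hand side is ≤ 0. -/
/-!
Since `K ≥ -κ²`, the integrand is at most `κ² (sinh² + cosh²)(κt)`, the derivative of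
`κ sinh(κt) cosh(κt)`. Hence the bracket is at most `cosh²(κb) (κ tanh(κb) - Λ)`, where the
second factor is `≤ 0` because `tanh < 1` and `κ ≤ Λ`. As `cosh² ≥ 1` and `tanh` is monotone,
this is at most `κ tanh(κρ₀) - Λ ≤ 0`.
-/

open Real

theorem Real.tanh_le_tanh_iff {x y : ℝ} : tanh x ≤ tanh y ↔ x ≤ y := by
  rw [← artanh_le_artanh_iff ⟨neg_one_lt_tanh x, tanh_lt_one x⟩
    ⟨neg_one_lt_tanh y, tanh_lt_one y⟩, artanh_tanh, artanh_tanh]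

theorem hasDerivAt_mul_sinh_mul_cosh (κ t : ℝ) :
    HasDerivAt (fun s => κ * sinh (κ * s) * cosh (κ * s))
      (κ ^ 2 * (sinh (κ * t) ^ 2 + cosh (κ * t) ^ 2)) t := by
  have hlin : HasDerivAt (fun s => κ * s) κ t := by
    simpa using (hasDerivAt_id t).const_mul κ
  exact ((hlin.sinh.const_mul κ).mul hlin.cosh).congr_deriv (by ring)

theorem integral_sq_mul_sinh_sq_add_cosh_sq (κ b : ℝ) :
    ∫ t in (0 : ℝ)..b, κ ^ 2 * (sinh (κ * t) ^ 2 + cosh (κ * t) ^ 2) =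
      κ * sinh (κ * b) * cosh (κ * b) := by
  rw [intervalIntegral.integral_eq_sub_of_hasDerivAt
    (fun t _ => hasDerivAt_mul_sinh_mul_cosh κ t)
    (Continuous.intervalIntegrable (by fun_prop) _ _)]
  simp

theorem integral_sinh_sq_sub_cosh_sq_mul_le {κ b : ℝ} (hb : 0 ≤ b) {K : ℝ → ℝ}
    (hK_int : IntervalIntegrable K MeasureTheory.volume 0 b)
    (hK : ∀ t ∈ Set.Icc (0 : ℝ) b, -κ ^ 2 ≤ K t) :
    ∫ t in (0 : ℝ)..b, (κ ^ 2 * sinh (κ * t) ^ 2 - cosh (κ * t) ^ 2 * K t) ≤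
      κ * sinh (κ * b) * cosh (κ * b) := by
  rw [← integral_sq_mul_sinh_sq_add_cosh_sq]
  refine intervalIntegral.integral_mono_on hb
    (((by fun_prop : Continuous fun t => κ ^ 2 * sinh (κ * t) ^ 2).intervalIntegrable 0 b).sub
      (hK_int.continuousOn_mul (by fun_prop)))
    (Continuous.intervalIntegrable (by fun_prop) _ _) fun t ht => ?_
  have := mul_le_mul_of_nonneg_left (hK t ht) (sq_nonneg (cosh (κ * t)))
  linarith

theorem neg_mul_cosh_sq_add_mul_sinh_mul_cosh (κ Λ x : ℝ) :
    -Λ * cosh x ^ 2 + κ * sinh x * cosh x = cosh x ^ 2 * (κ * tanh x - Λ) := by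
  rw [tanh_eq_sinh_div_cosh]
  field_simp
  ring

theorem cosh_sq_mul_le_of_nonpos (x : ℝ) {c : ℝ} (hc : c ≤ 0) : cosh x ^ 2 * c ≤ c :=
  mul_le_of_one_le_left hc (one_le_pow₀ (one_le_cosh x))

theorem mul_tanh_sub_nonpos {κ Λ : ℝ} (hκ : 0 ≤ κ) (hΛ : κ ≤ Λ) (x : ℝ) : κ * tanh x - Λ ≤ 0 := by
  nlinarith [tanh_lt_one x]

theorem second_variation_estimate_general (κ ρ₀ b Λ α : ℝ) (hκ : 0 < κ)
    (hb : 0 < b) (hbρ₀ : b ≤ ρ₀) (hΛ : κ ≤ Λ)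
    (K : ℝ → ℝ) (hK_int : IntervalIntegrable K MeasureTheory.volume 0 b)
    (hK : ∀ t ∈ Set.Icc (0:ℝ) b, -κ ^ 2 ≤ K t) :
    α ^ 2 * (-Λ * Real.cosh (κ * b) ^ 2 +
        ∫ t in (0:ℝ)..b, (κ ^ 2 * Real.sinh (κ * t) ^ 2 - Real.cosh (κ * t) ^ 2 * K t))
      ≤ α ^ 2 * (κ * Real.tanh (κ * ρ₀) - Λ) ∧
    α ^ 2 * (κ * Real.tanh (κ * ρ₀) - Λ) ≤ 0 := by
  have htanh : tanh (κ * b) ≤ tanh (κ * ρ₀) :=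
    tanh_le_tanh_iff.2 (mul_le_mul_of_nonneg_left hbρ₀ hκ.le)
  have hbracket : -Λ * cosh (κ * b) ^ 2 +
      ∫ t in (0:ℝ)..b, (κ ^ 2 * sinh (κ * t) ^ 2 - cosh (κ * t) ^ 2 * K t)
      ≤ κ * tanh (κ * ρ₀) - Λ :=
    calc _ ≤ -Λ * cosh (κ * b) ^ 2 + κ * sinh (κ * b) * cosh (κ * b) := by
          gcongr; exact integral_sinh_sq_sub_cosh_sq_mul_le hb.le hK_int hK
      _ = cosh (κ * b) ^ 2 * (κ * tanh (κ * b) - Λ) :=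
          neg_mul_cosh_sq_add_mul_sinh_mul_cosh κ Λ _
      _ ≤ κ * tanh (κ * b) - Λ := cosh_sq_mul_le_of_nonpos _ (mul_tanh_sub_nonpos hκ.le hΛ _)
      _ ≤ κ * tanh (κ * ρ₀) - Λ := by gcongr
  exact ⟨mul_le_mul_of_nonneg_left hbracket (sq_nonneg α),
    mul_nonpos_of_nonneg_of_nonpos (sq_nonneg α) (mul_tanh_sub_nonpos hκ.le hΛ _)⟩

theorem second_variation_estimate (κ ρ₀ b Λ α : ℝ) (hκ : 0 < κ) (hρ₀ : 0 < ρ₀)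
    (hb : 0 < b) (hbρ₀ : b ≤ ρ₀) (hΛ : κ ≤ Λ)
    (K : ℝ → ℝ) (hK_int : IntervalIntegrable K MeasureTheory.volume 0 b)
    (hK : ∀ t ∈ Set.Icc (0:ℝ) b, -κ ^ 2 ≤ K t) :
    α ^ 2 * (-Λ * Real.cosh (κ * b) ^ 2 +
        ∫ t in (0:ℝ)..b, (κ ^ 2 * Real.sinh (κ * t) ^ 2 - Real.cosh (κ * t) ^ 2 * K t))
      ≤ α ^ 2 * (κ * Real.tanh (κ * ρ₀) - Λ) ∧
    α ^ 2 * (κ * Real.tanh (κ * ρ₀) - Λ) ≤ 0 :=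
  second_variation_estimate_general κ ρ₀ b Λ α hκ hb hbρ₀ hΛ K hK_int hK
end

section
/- Let κ > 0, ρ₀ > 0 and Λ ≥ κ be real numbers, and let α, β be real numbers with α² + β² = 1. Let f : ℝ → ℝ be twice differentiable at 0 with f(0) = b where 0 < b ≤ ρ₀, f'(0) = −β, and f''(0) ≤ α²·(κ·tanh(κρ₀) − Λ). Then the second derivative at 0 of the function s ↦ −log(f(s)) is at least min{1/ρ₀², (Λ − κ·tanh(κρ₀))/ρ₀}, and this minimum is strictly positive. -/
/-!
Writing `T = κ tanh(κρ₀)`, one computes `(-log f)''(0) = (β / b)² - f''(0) / b`. Since `b ≤ ρ₀` and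
`-f''(0) ≥ α² (Λ - T) ≥ 0`, this is at least `β² / ρ₀² + α² (Λ - T) / ρ₀`, a convex combination
(with weights `β², α²`) of the two quantities whose minimum is taken. The minimum is positive because
`tanh < 1` forces `T < κ ≤ Λ`.
-/

open Filter Topology

theorem deriv_deriv_neg_log_comp {f : ℝ → ℝ} {x : ℝ}
    (hf : ∀ᶠ s in 𝓝 x, DifferentiableAt ℝ f s) (hf' : DifferentiableAt ℝ (deriv f) x)
    (hfx : f x ≠ 0) :
    deriv (deriv fun s => -Real.log (f s)) x = (deriv f x / f x) ^ 2 - deriv (deriv f) x / f x := by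
  have hne : ∀ᶠ s in 𝓝 x, f s ≠ 0 := hf.self_of_nhds.continuousAt.eventually_ne hfx
  have hlog : deriv (fun s => -Real.log (f s)) =ᶠ[𝓝 x] fun s => -(deriv f s / f s) := by
    filter_upwards [hf, hne] with s hds hs
    exact ((hds.hasDerivAt.log hs).neg).deriv
  rw [hlog.deriv_eq, deriv.fun_neg, deriv_fun_div hf' hf.self_of_nhds hfx]
  field_simp
  ring

theorem Real.mul_tanh_lt_self {κ : ℝ} (hκ : 0 < κ) (x : ℝ) : κ * Real.tanh x < κ :=
  mul_lt_of_lt_one_right hκ (Real.tanh_lt_one x)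

theorem min_le_add_mul_of_add_eq_one {p q u v : ℝ} (hu : 0 ≤ u) (hv : 0 ≤ v) (huv : u + v = 1) :
    min p q ≤ u * p + v * q := by
  calc min p q = u * min p q + v * min p q := by rw [← add_mul, huv, one_mul]
    _ ≤ u * p + v * q := by gcongr <;> simp

theorem neg_log_convexity_lower_bound (κ ρ₀ Λ α β b : ℝ) (hκ : 0 < κ) (hρ₀ : 0 < ρ₀)
    (hΛ : κ ≤ Λ) (hαβ : α ^ 2 + β ^ 2 = 1)
    (f : ℝ → ℝ)
    (hf : ∀ᶠ s in nhds (0:ℝ), DifferentiableAt ℝ f s)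
    (hf'' : DifferentiableAt ℝ (deriv f) 0)
    (hf0 : f 0 = b) (hb : 0 < b) (hbρ₀ : b ≤ ρ₀)
    (hf'0 : deriv f 0 = -β)
    (hf''0 : deriv (deriv f) 0 ≤ α ^ 2 * (κ * Real.tanh (κ * ρ₀) - Λ)) :
    min (1 / ρ₀ ^ 2) ((Λ - κ * Real.tanh (κ * ρ₀)) / ρ₀)
      ≤ deriv (deriv (fun s => -Real.log (f s))) 0 ∧
    0 < min (1 / ρ₀ ^ 2) ((Λ - κ * Real.tanh (κ * ρ₀)) / ρ₀) := by
  set T := κ * Real.tanh (κ * ρ₀)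
  have hΛT : 0 < Λ - T := by linarith [Real.mul_tanh_lt_self hκ (κ * ρ₀)]
  refine ⟨?_, lt_min (by positivity) (by positivity)⟩
  rw [deriv_deriv_neg_log_comp hf hf'' (hf0 ▸ hb.ne'), hf0, hf'0]
  have hβ : β ^ 2 * (1 / ρ₀ ^ 2) ≤ (-β / b) ^ 2 := by
    rw [div_pow, neg_sq, ← div_eq_mul_one_div]
    gcongr
  have hα : α ^ 2 * ((Λ - T) / ρ₀) ≤ -(deriv (deriv f) 0 / b) := by
    have hA : α ^ 2 * (Λ - T) ≤ -deriv (deriv f) 0 := by linarith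
    rw [← neg_div, ← mul_div_assoc]
    exact div_le_div₀ (le_trans (by positivity) hA) hA hb hbρ₀
  calc min (1 / ρ₀ ^ 2) ((Λ - T) / ρ₀)
      ≤ β ^ 2 * (1 / ρ₀ ^ 2) + α ^ 2 * ((Λ - T) / ρ₀) :=
        min_le_add_mul_of_add_eq_one (sq_nonneg β) (sq_nonneg α) (by linarith)
    _ ≤ (-β / b) ^ 2 - deriv (deriv f) 0 / b := by linarith
end

section
/- Let q ≥ 1 be an integer and κ > 0, b > 0 real numbers. Let S₁, …, S_q be real numbers with S₁ + ⋯ + S_q ≥ qκ, and let K₁, …, K_q : ℝ → ℝ be functions integrable on [0, b] with K₁(t) + ⋯ + K_q(t) ≥ −qκ² for all t ∈ [0, b]. Then the sum over k = 1, …, q of (−S_k·cosh(κb)² + ∫₀^b (κ²·sinh(κt)² − cosh(κt)²·K_k(t)) dt) is at most q·cosh(κb)²·(κ·tanh(κb) − κ), which is strictly negative. -/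
/-! The integrand summed over `k` is at most `q κ² (sinh² + cosh²)(κt)` by the lower bound on
`∑ K_k`, and this majorant is the derivative of `q κ sinh(κt) cosh(κt)`. Together with
`∑ S_k ≥ qκ` the whole sum is at most `qκ cosh(κb) (sinh(κb) - cosh(κb))`, which is
`q cosh²(κb) (κ tanh(κb) - κ)` and negative because `tanh < 1`. -/

open Real Finset intervalIntegral

theorem intervalIntegral.sum_integral_le_of_sum_le {ι : Type*} (s : Finset ι)
    {f : ι → ℝ → ℝ} {g : ℝ → ℝ} {a b : ℝ} (hab : a ≤ b)
    (hf : ∀ i ∈ s, IntervalIntegrable (f i) MeasureTheory.volume a b)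
    (hg : IntervalIntegrable g MeasureTheory.volume a b)
    (hfg : ∀ t ∈ Set.Icc a b, ∑ i ∈ s, f i t ≤ g t) :
    ∑ i ∈ s, ∫ t in a..b, f i t ≤ ∫ t in a..b, g t := by
  rw [← integral_finsetSum hf]
  refine integral_mono_on hab ?_ hg hfg
  simpa only [Finset.sum_fn] using IntervalIntegrable.sum s hf

theorem Real.integral_mul_sq_sinh_add_sq_cosh (κ a b : ℝ) :
    ∫ t in a..b, κ ^ 2 * (sinh (κ * t) ^ 2 + cosh (κ * t) ^ 2)
      = κ * (sinh (κ * b) * cosh (κ * b)) - κ * (sinh (κ * a) * cosh (κ * a)) := by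
  have hderiv (t : ℝ) : HasDerivAt (fun t => κ * (sinh (κ * t) * cosh (κ * t)))
      (κ ^ 2 * (sinh (κ * t) ^ 2 + cosh (κ * t) ^ 2)) t := by
    have hlin : HasDerivAt (fun x : ℝ => κ * x) κ t := by
      simpa using (hasDerivAt_id t).const_mul κ
    have hsinh := (hasDerivAt_sinh (κ * t)).comp t hlin
    have hcosh := (hasDerivAt_cosh (κ * t)).comp t hlin
    exact ((hsinh.mul hcosh).const_mul κ).congr_deriv (by simp only [Function.comp_apply]; ring)
  exact integral_eq_sub_of_hasDerivAt (fun t _ => hderiv t)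
    (Continuous.intervalIntegrable (by fun_prop) a b)

theorem Finset.sum_sub_mul_le {ι : Type*} (s : Finset ι) {K : ι → ℝ} {a c m : ℝ} (hc : 0 ≤ c)
    (hK : -(#s : ℝ) * m ≤ ∑ i ∈ s, K i) :
    ∑ i ∈ s, (a - c * K i) ≤ #s * (a + c * m) := by
  rw [sum_sub_distrib, sum_const, nsmul_eq_mul, ← mul_sum]
  nlinarith

theorem Real.cosh_sq_mul_mul_tanh_sub (κ x : ℝ) :
    cosh x ^ 2 * (κ * tanh x - κ) = κ * (sinh x * cosh x) - κ * cosh x ^ 2 := by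
  rw [tanh_eq_sinh_div_cosh]
  field_simp

theorem Real.mul_tanh_sub_self_neg {κ : ℝ} (hκ : 0 < κ) (x : ℝ) : κ * tanh x - κ < 0 := by
  nlinarith [tanh_lt_one x]

theorem case_one_sum_estimate (q : ℕ) (hq : 1 ≤ q) (κ b : ℝ) (hκ : 0 < κ) (hb : 0 < b)
    (S : Fin q → ℝ) (hS : (q : ℝ) * κ ≤ ∑ k, S k)
    (K : Fin q → ℝ → ℝ)
    (hK_int : ∀ k, IntervalIntegrable (K k) MeasureTheory.volume 0 b)
    (hK : ∀ t ∈ Set.Icc (0:ℝ) b, -(q : ℝ) * κ ^ 2 ≤ ∑ k, K k t) :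
    (∑ k, (-S k * Real.cosh (κ * b) ^ 2 +
        ∫ t in (0:ℝ)..b, (κ ^ 2 * Real.sinh (κ * t) ^ 2 - Real.cosh (κ * t) ^ 2 * K k t)))
      ≤ (q : ℝ) * Real.cosh (κ * b) ^ 2 * (κ * Real.tanh (κ * b) - κ) ∧
    (q : ℝ) * Real.cosh (κ * b) ^ 2 * (κ * Real.tanh (κ * b) - κ) < 0 := by
  have hq' : (0 : ℝ) < q := by exact_mod_cast hq
  refine ⟨?_, mul_neg_of_pos_of_neg (by positivity) (mul_tanh_sub_self_neg hκ _)⟩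
  have hintegrals : ∑ k, ∫ t in (0:ℝ)..b, (κ ^ 2 * sinh (κ * t) ^ 2 - cosh (κ * t) ^ 2 * K k t)
      ≤ q * κ * (sinh (κ * b) * cosh (κ * b)) :=
    calc _ ≤ ∫ t in (0:ℝ)..b, (q : ℝ) * (κ ^ 2 * (sinh (κ * t) ^ 2 + cosh (κ * t) ^ 2)) := by
          refine sum_integral_le_of_sum_le _ hb.le (fun k _ => ?_)
            (Continuous.intervalIntegrable (by fun_prop) 0 b) (fun t ht => ?_)
          · exact (Continuous.intervalIntegrable (by fun_prop) 0 b).sub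
              ((hK_int k).continuousOn_mul (by fun_prop))
          · have hpointwise := sum_sub_mul_le univ (K := fun k => K k t)
              (a := κ ^ 2 * sinh (κ * t) ^ 2) (m := κ ^ 2) (sq_nonneg (cosh (κ * t))) (by simpa using hK t ht)
            simp only [card_fin] at hpointwise
            linarith
      _ = q * κ * (sinh (κ * b) * cosh (κ * b)) := by
          rw [integral_const_mul, integral_mul_sq_sinh_add_sq_cosh]
          simp [mul_assoc]
  have hSk : (q : ℝ) * κ * cosh (κ * b) ^ 2 ≤ (∑ k, S k) * cosh (κ * b) ^ 2 :=
    mul_le_mul_of_nonneg_right hS (sq_nonneg _)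
  rw [sum_add_distrib, mul_assoc, cosh_sq_mul_mul_tanh_sub]
  simp only [neg_mul, sum_neg_distrib, ← sum_mul]
  linarith
end

section
/- Let E be a real inner product space, let f : E → ℝ and χ : ℝ → ℝ be twice continuously differentiable, let x ∈ E, let q ≥ 1 be an integer and let X₁, …, X_q ∈ E be vectors. Suppose θ > 0, P > 0 and β > 0 are real numbers such that |Df(x)(X₁)| ≥ θ, D²f(x)(X_k, X_k) ≤ P for every k = 1, …, q, χ'(−f(x)) > 0, and χ''(−f(x)) ≥ χ'(−f(x))·(β + qP)/θ². Then Σ_{k=1}^q D²g(x)(X_k, X_k) ≥ β·χ'(−f(x)), where g(x) = χ(−f(x)), Df(x) denotes the Fréchet derivative of f at x, and D²f(x), D²g(x) the second Fréchet derivatives as bilinear forms. -/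
/-!
By the chain rule, `D²(χ ∘ (-f))(X, X) = χ''(-f) (Df X)² - χ'(-f) D²f(X, X)`. Since `χ'' ≥ 0`,
dropping every gradient term except the one of `X₁` and bounding each Hessian term by `P` leaves
`χ'' θ² - q P χ'`, which the growth condition on `χ''` bounds below by `β χ'`.
-/

open Finset

section SecondDerivative

variable {E : Type*} [NormedAddCommGroup E] [NormedSpace ℝ E]

theorem fderiv_fderiv_comp_apply {χ : ℝ → ℝ} {h : E → ℝ} {x : E}
    (hχ : Differentiable ℝ χ) (hχ' : DifferentiableAt ℝ (deriv χ) (h x))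
    (hh : Differentiable ℝ h) (hh' : DifferentiableAt ℝ (fderiv ℝ h) x) (v w : E) :
    fderiv ℝ (fderiv ℝ (χ ∘ h)) x v w =
      deriv (deriv χ) (h x) * fderiv ℝ h x v * fderiv ℝ h x w
        + deriv χ (h x) * fderiv ℝ (fderiv ℝ h) x v w := by
  have hfirst : fderiv ℝ (χ ∘ h) = fun y => deriv χ (h y) • fderiv ℝ h y :=
    funext fun y => ((hχ (h y)).hasDerivAt.comp_hasFDerivAt y (hh y).hasFDerivAt).fderiv
  have hsecond : HasFDerivAt (fun y => deriv χ (h y) • fderiv ℝ h y)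
      (deriv χ (h x) • fderiv ℝ (fderiv ℝ h) x
        + (deriv (deriv χ) (h x) • fderiv ℝ h x).smulRight (fderiv ℝ h x)) x :=
    (hχ'.hasDerivAt.comp_hasFDerivAt x (hh x).hasFDerivAt).smul hh'.hasFDerivAt
  rw [hfirst, hsecond.fderiv]
  simp only [add_apply, smul_apply, ContinuousLinearMap.smulRight_apply, smul_eq_mul]
  ring

theorem fderiv_fderiv_comp_neg_apply_self {χ : ℝ → ℝ} {f : E → ℝ}
    (hχ : ContDiff ℝ 2 χ) (hf : ContDiff ℝ 2 f) (x v : E) :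
    fderiv ℝ (fderiv ℝ fun y => χ (-f y)) x v v =
      deriv (deriv χ) (-f x) * fderiv ℝ f x v ^ 2
        - deriv χ (-f x) * fderiv ℝ (fderiv ℝ f) x v v := by
  have hf' : Differentiable ℝ (fderiv ℝ f) :=
    (hf.fderiv_right (m := 1) (by norm_num)).differentiable one_ne_zero
  have hneg : fderiv ℝ (fun y => -f y) = fun y => -fderiv ℝ f y :=
    funext fun y => fderiv_fun_neg
  have hchain := fderiv_fderiv_comp_apply (h := fun y => -f y) (hχ.differentiable two_ne_zero)
    (hχ.differentiable_deriv_two _)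
    (hf.differentiable two_ne_zero).neg (by rw [hneg]; exact (hf' x).neg) v v
  rw [Function.comp_def] at hchain
  rw [hchain, hneg, fderiv_fun_neg]
  simp only [neg_apply]
  ring

end SecondDerivative

theorem sub_le_sum_mul_sq_sub_mul {ι : Type*} [Fintype ι] {a b θ P : ℝ} {d H : ι → ℝ} (i : ι)
    (ha : 0 ≤ a) (hb : 0 ≤ b) (hθ : 0 ≤ θ) (hd : θ ≤ |d i|) (hH : ∀ k, H k ≤ P) :
    a * θ ^ 2 - Fintype.card ι * (b * P) ≤ ∑ k, (a * d k ^ 2 - b * H k) := by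
  have hsq : a * θ ^ 2 ≤ ∑ k, a * d k ^ 2 :=
    calc a * θ ^ 2 ≤ a * d i ^ 2 := by
          rw [← sq_abs (d i)]; gcongr
      _ ≤ ∑ k, a * d k ^ 2 :=
          Finset.single_le_sum (f := fun k => a * d k ^ 2) (fun k _ => by positivity) (mem_univ i)
  have hlin : ∑ k, b * H k ≤ Fintype.card ι * (b * P) := by
    simpa using sum_le_sum fun k (_ : k ∈ univ) => mul_le_mul_of_nonneg_left (hH k) hb
  rw [sum_sub_distrib]
  linarith

theorem case_three_hessian_lower_bound {E : Type*} [NormedAddCommGroup E]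
    [InnerProductSpace ℝ E]
    (f : E → ℝ) (χ : ℝ → ℝ) (hf : ContDiff ℝ 2 f) (hχ : ContDiff ℝ 2 χ)
    (x : E) (q : ℕ) (hq : 1 ≤ q) (X : Fin q → E)
    (θ P β : ℝ) (hθ : 0 < θ) (hP : 0 < P) (hβ : 0 < β)
    (hgrad : θ ≤ |fderiv ℝ f x (X ⟨0, hq⟩)|)
    (hhess : ∀ k, fderiv ℝ (fderiv ℝ f) x (X k) (X k) ≤ P)
    (hχ' : 0 < deriv χ (-f x))
    (hχ'' : deriv χ (-f x) * (β + (q : ℝ) * P) / θ ^ 2 ≤ deriv (deriv χ) (-f x))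
    (g : E → ℝ) (hg : g = fun x => χ (-f x)) :
    β * deriv χ (-f x) ≤ ∑ k, fderiv ℝ (fderiv ℝ g) x (X k) (X k) := by
  have hgrowth : deriv χ (-f x) * (β + q * P) ≤ deriv (deriv χ) (-f x) * θ ^ 2 :=
    (div_le_iff₀ (by positivity)).mp hχ''
  have hχ''_nonneg : 0 ≤ deriv (deriv χ) (-f x) := le_trans (by positivity) hχ''
  simp only [hg, fderiv_fderiv_comp_neg_apply_self hχ hf]
  calc β * deriv χ (-f x)
      ≤ deriv (deriv χ) (-f x) * θ ^ 2 - q * (deriv χ (-f x) * P) := by linarith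
    _ ≤ _ := by
      simpa using sub_le_sum_mul_sq_sub_mul ⟨0, hq⟩ hχ''_nonneg hχ'.le hθ.le hgrad hhess
end
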